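/- arXiv:1612.07570 — 5 statements merged into one kernel-verified Lean document; each statement's English description precedes it below -/
import Mathlib

section
/- Let ρ_max = Σₙ pₙ |n₊⟩⟨n₊| where {|n₊⟩} is a basis mutually unbiased to the incoherent basis and {pₙ} is a probability distribution. Then for every unitary U there exists a MIO channel Λ with Λ(ρ_max) = U ρ_max U†. Consequently, for any coherence monotone C that is non-increasing under MIO, C(UρU†) ≤ C(ρ_max) for all unitaries U and all states ρ with the same spectrum {pₙ} as ρ_max. -/
open Matrix BigOperators
open scoped ComplexOrder

noncomputable section

/-- A density matrix: positive semidefinite with unit trace. -/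
def IsDensity {n : Type*} [Fintype n] (ρ : Matrix n n ℂ) : Prop :=
  ρ.PosSemidef ∧ ρ.trace = 1

/-- A quantum channel (CPTP map), given via a Kraus representation. -/
def IsChannel {m n : Type*} [Fintype m] [Fintype n] [DecidableEq m]
    (Λ : Matrix m m ℂ → Matrix n n ℂ) : Prop :=
  ∃ (k : ℕ) (K : Fin k → Matrix n m ℂ),
    (∑ i, (K i)ᴴ * K i) = 1 ∧ ∀ ρ, Λ ρ = ∑ i, K i * ρ * (K i)ᴴ

/-- A maximally incoherent operation: maps every incoherent (diagonal) state to an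
incoherent state.  The incoherent basis is fixed to be the standard basis. -/
def IsMIO {n : Type*} [Fintype n] (Λ : Matrix n n ℂ → Matrix n n ℂ) : Prop :=
  ∀ σ, IsDensity σ → σ.IsDiag → (Λ σ).IsDiag

/-- Sandwiching a matrix between two rank-one projectors. -/
lemma mcms_sandwich {d : ℕ} (u v : Fin d → ℂ) (M : Matrix (Fin d) (Fin d) ℂ) :
    vecMulVec u (star u) * M * vecMulVec v (star v)
      = (star u ⬝ᵥ M *ᵥ v) • vecMulVec u (star v) := by
  ext i j
  simp only [Matrix.mul_apply, vecMulVec_apply, dotProduct, mulVec, Matrix.smul_apply,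
    smul_eq_mul, Pi.star_apply, Finset.sum_mul, Finset.mul_sum]
  rw [Finset.sum_comm]
  apply Finset.sum_congr rfl; intro k _
  apply Finset.sum_congr rfl; intro l _
  ring

/-- Completeness of an orthonormal basis: the rank-one projectors resolve the identity. -/
lemma mcms_completeness {d : ℕ} (b : Fin d → Fin d → ℂ)
    (hortho : ∀ n m, star (b n) ⬝ᵥ b m = if n = m then 1 else 0) :
    ∑ n, vecMulVec (b n) (star (b n)) = (1 : Matrix (Fin d) (Fin d) ℂ) := by
  set B : Matrix (Fin d) (Fin d) ℂ := Matrix.of (fun n i => star (b n i)) with hB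
  have h1 : B * Bᴴ = 1 := by
    ext n m
    simpa [hB, Matrix.mul_apply, conjTranspose_apply, dotProduct, Pi.star_apply,
      mul_comm, Matrix.one_apply] using hortho n m
  have h2 : Bᴴ * B = 1 := mul_eq_one_comm.mp h1
  ext i j
  have := congrFun (congrFun h2 i) j
  simpa [hB, Matrix.mul_apply, conjTranspose_apply, Matrix.sum_apply,
    vecMulVec_apply, Pi.star_apply, Complex.star_def] using this

/-- for `ρ_max = Σₙ pₙ |n₊⟩⟨n₊|` diagonal in a basis mutually unbiased to the
incoherent basis, every unitary conjugation of `ρ_max` can be realized by a MIO channel;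
consequently every MIO coherence monotone satisfies `C(UρU†) ≤ C(ρ_max)` for every unitary
`U` and every state `ρ` with the same spectrum as `ρ_max`. -/
theorem mcms_unitary_via_MIO_and_max_coherence (d : ℕ) (hd : 0 < d)
    (b : Fin d → Fin d → ℂ)
    (hortho : ∀ n m, star (b n) ⬝ᵥ b m = if n = m then 1 else 0)
    (hmub : ∀ i n, ‖b n i‖ ^ 2 = (d : ℝ)⁻¹)
    (p : Fin d → ℝ) (hp0 : ∀ n, 0 ≤ p n) (hp1 : ∑ n, p n = 1)
    (ρmax : Matrix (Fin d) (Fin d) ℂ)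
    (hρmax : ρmax = ∑ n, (p n : ℂ) • vecMulVec (b n) (star (b n))) :
    (∀ U ∈ Matrix.unitaryGroup (Fin d) ℂ,
      ∃ Λ : Matrix (Fin d) (Fin d) ℂ → Matrix (Fin d) (Fin d) ℂ,
        IsChannel Λ ∧ IsMIO Λ ∧ Λ ρmax = U * ρmax * Uᴴ) ∧
    (∀ C : Matrix (Fin d) (Fin d) ℂ → ℝ,
      (∀ τ, 0 ≤ C τ) →
      (∀ Λ, IsChannel Λ → IsMIO Λ → ∀ τ, IsDensity τ → C (Λ τ) ≤ C τ) →
      ∀ U ∈ Matrix.unitaryGroup (Fin d) ℂ,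
      ∀ ρ : Matrix (Fin d) (Fin d) ℂ,
        (∃ V ∈ Matrix.unitaryGroup (Fin d) ℂ, ρ = V * ρmax * Vᴴ) →
        C (U * ρ * Uᴴ) ≤ C ρmax) := by
  -- the rank-one projectors
  set P : Fin d → Matrix (Fin d) (Fin d) ℂ :=
    fun n => vecMulVec (b n) (star (b n)) with hP
  have hPsum : ∑ n, P n = 1 := mcms_completeness b hortho
  -- P n is Hermitian
  have hPherm : ∀ n, (P n)ᴴ = P n := by
    intro n
    ext i j
    simp [hP, conjTranspose_apply, vecMulVec_apply, mul_comm]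
  -- orthogonality of projectors
  have hPmul : ∀ n m, P n * P m = if n = m then P n else 0 := by
    intro n m
    have := mcms_sandwich (b n) (b m) (1 : Matrix (Fin d) (Fin d) ℂ)
    rw [mul_one] at this
    rw [show vecMulVec (b n) (star (b n)) = P n from rfl] at this
    rw [show vecMulVec (b m) (star (b m)) = P m from rfl] at this
    rw [this, one_mulVec, hortho n m]
    by_cases h : n = m
    · subst h; simp [hP]
    · simp [h]
  -- P n * ρmax = p n • P n
  have hPρ : ∀ n, P n * ρmax = (p n : ℂ) • P n := by
    intro n
    rw [hρmax, Finset.mul_sum]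
    have : ∀ m, P n * ((p m : ℂ) • vecMulVec (b m) (star (b m)))
        = if m = n then (p n : ℂ) • P n else 0 := by
      intro m
      rw [show vecMulVec (b m) (star (b m)) = P m from rfl, Matrix.mul_smul, hPmul n m]
      by_cases h : m = n
      · subst h; simp
      · simp [h, Ne.symm h]
    simp only [this]
    rw [Finset.sum_ite_eq' Finset.univ n (fun _ => (p n : ℂ) • P n)]
    simp
  -- ρmax is a density matrix
  have hρden : IsDensity ρmax := by
    constructor
    · -- PosSemidef via Xᴴ * X
      set X : Matrix (Fin d) (Fin d) ℂ :=
        Matrix.of (fun n i => (Real.sqrt (p n) : ℂ) * star (b n i)) with hX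
      have : ρmax = Xᴴ * X := by
        rw [hρmax]
        ext i j
        simp only [Matrix.mul_apply, conjTranspose_apply, hX, Matrix.of_apply,
          Matrix.sum_apply, Matrix.smul_apply, vecMulVec_apply, Pi.star_apply, smul_eq_mul,
          star_mul']
        apply Finset.sum_congr rfl; intro n _
        have h1 : star ((Real.sqrt (p n) : ℂ)) = (Real.sqrt (p n) : ℂ) := by
          simp [Complex.star_def, Complex.conj_ofReal]
        have h2 : ((Real.sqrt (p n) : ℂ)) * ((Real.sqrt (p n) : ℂ)) = (p n : ℂ) := by
          rw [← Complex.ofReal_mul, Real.mul_self_sqrt (hp0 n)]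
        rw [star_star, h1]
        have h2' : ((Real.sqrt (p n) : ℂ)) ^ 2 = (p n : ℂ) := by rw [sq]; exact h2
        linear_combination (- b n i * star (b n j)) * h2'
      rw [this]
      exact Matrix.posSemidef_conjTranspose_mul_self X
    · -- trace
      rw [hρmax, trace_sum]
      have : ∀ n, ((p n : ℂ) • vecMulVec (b n) (star (b n))).trace = (p n : ℂ) := by
        intro n
        rw [trace_smul]
        have h3 : (vecMulVec (b n) (star (b n))).trace = star (b n) ⬝ᵥ b n := by
          simp [Matrix.trace, Matrix.diag, vecMulVec_apply, dotProduct, mul_comm]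
        rw [h3]
        have := hortho n n
        simp only [if_pos rfl] at this
        simp [this]
      simp only [this]
      exact_mod_cast hp1
  -- Part 1
  have main : ∀ U ∈ Matrix.unitaryGroup (Fin d) ℂ,
      ∃ Λ : Matrix (Fin d) (Fin d) ℂ → Matrix (Fin d) (Fin d) ℂ,
        IsChannel Λ ∧ IsMIO Λ ∧ Λ ρmax = U * ρmax * Uᴴ := by
    intro U hU
    have hUl : Uᴴ * U = 1 := by
      have := (Matrix.mem_unitaryGroup_iff'.mp hU)
      simpa [Matrix.star_eq_conjTranspose] using this
    have hUr : U * Uᴴ = 1 := by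
      have := (Matrix.mem_unitaryGroup_iff.mp hU)
      simpa [Matrix.star_eq_conjTranspose] using this
    refine ⟨fun ρ => ∑ n, (U * P n) * ρ * (U * P n)ᴴ, ⟨d, fun n => U * P n, ?_, fun ρ => rfl⟩,
      ?_, ?_⟩
    · -- trace preserving
      have : ∀ n : Fin d, (U * P n)ᴴ * (U * P n) = P n := by
        intro n
        rw [conjTranspose_mul, hPherm n]
        calc (P n * Uᴴ) * (U * P n) = P n * (Uᴴ * U) * P n := by noncomm_ring
          _ = P n := by rw [hUl, Matrix.mul_one, hPmul n n]; simp
      simp only [this]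
      exact hPsum
    · -- MIO
      intro σ hσden hσdiag
      have htr : ∑ i, σ i i = 1 := by
        have := hσden.2
        simpa [Matrix.trace, Matrix.diag] using this
      have hKey : ∀ n, star (b n) ⬝ᵥ σ *ᵥ b n = (d : ℂ)⁻¹ := by
        intro n
        have hdiag : ∀ i k, i ≠ k → σ i k = 0 := fun i k h => hσdiag h
        have hbb : ∀ i, star (b n i) * b n i = ((d : ℝ)⁻¹ : ℂ) := by
          intro i
          rw [Complex.star_def, Complex.conj_mul']
          exact_mod_cast congrArg Complex.ofReal (hmub i n)
        have : star (b n) ⬝ᵥ σ *ᵥ b n = ∑ i, σ i i * ((d : ℝ)⁻¹ : ℂ) := by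
          simp only [dotProduct, mulVec, Pi.star_apply]
          apply Finset.sum_congr rfl; intro i _
          rw [show (∑ k, σ i k * b n k) = σ i i * b n i by
            apply Finset.sum_eq_single i
            · intro k _ hk; rw [hdiag i k (Ne.symm hk), zero_mul]
            · intro h; exact absurd (Finset.mem_univ i) h]
          rw [← mul_assoc, mul_comm (star (b n i)) (σ i i), mul_assoc, hbb i]
        rw [this, ← Finset.sum_mul, htr, one_mul]
        push_cast
        ring
      have hsand : ∀ n, P n * σ * P n = ((d : ℂ)⁻¹) • P n := by
        intro n
        have := mcms_sandwich (b n) (b n) σ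
        rw [show vecMulVec (b n) (star (b n)) = P n from rfl] at this
        rw [this, hKey n]
      have : (∑ n, (U * P n) * σ * (U * P n)ᴴ) = ((d : ℂ)⁻¹) • (1 : Matrix (Fin d) (Fin d) ℂ) := by
        have h1 : ∀ n : Fin d, (U * P n) * σ * (U * P n)ᴴ
            = ((d : ℂ)⁻¹) • (U * P n * Uᴴ) := by
          intro n
          rw [conjTranspose_mul, hPherm n]
          calc U * P n * σ * (P n * Uᴴ)
              = U * (P n * σ * P n) * Uᴴ := by noncomm_ring
            _ = U * (((d : ℂ)⁻¹) • P n) * Uᴴ := by rw [hsand n]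
            _ = ((d : ℂ)⁻¹) • (U * P n * Uᴴ) := by
                rw [Matrix.mul_smul, Matrix.smul_mul]
        simp only [h1, ← Finset.smul_sum]
        congr 1
        rw [← Finset.sum_mul, ← Finset.mul_sum, hPsum, mul_one, hUr]
      show (∑ n, (U * P n) * σ * (U * P n)ᴴ).IsDiag
      rw [this]
      intro i j hij
      simp [Matrix.one_apply, hij]
    · -- action on ρmax
      have h1 : ∀ n : Fin d, (U * P n) * ρmax * (U * P n)ᴴ
          = (p n : ℂ) • (U * P n * Uᴴ) := by
        intro n
        rw [conjTranspose_mul, hPherm n]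
        calc U * P n * ρmax * (P n * Uᴴ)
            = U * (P n * ρmax * P n) * Uᴴ := by noncomm_ring
          _ = U * (((p n : ℂ) • P n) * P n) * Uᴴ := by rw [hPρ n]
          _ = (p n : ℂ) • (U * P n * Uᴴ) := by
              rw [Matrix.smul_mul, hPmul n n]
              simp [Matrix.mul_smul, Matrix.smul_mul]
      show (∑ n, (U * P n) * ρmax * (U * P n)ᴴ) = U * ρmax * Uᴴ
      simp only [h1]
      have : ∑ n, (p n : ℂ) • (U * P n * Uᴴ) = U * (∑ n, (p n : ℂ) • P n) * Uᴴ := by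
        rw [Finset.mul_sum, Finset.sum_mul]
        apply Finset.sum_congr rfl; intro n _
        rw [Matrix.mul_smul, Matrix.smul_mul]
      rw [this, ← hρmax]
  refine ⟨main, ?_⟩
  intro C hC0 hmono U hU ρ hρ
  obtain ⟨V, hV, rfl⟩ := hρ
  have hUV : U * V ∈ Matrix.unitaryGroup (Fin d) ℂ := mul_mem hU hV
  obtain ⟨Λ, hch, hmio, heq⟩ := main (U * V) hUV
  have : U * (V * ρmax * Vᴴ) * Uᴴ = (U * V) * ρmax * (U * V)ᴴ := by
    rw [conjTranspose_mul]
    noncomm_ring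
  rw [this, ← heq]
  exact hmono Λ hch hmio ρmax hρden
end
end

section
/- For any contractive distance D and the associated coherence monotone C(ρ) = inf over incoherent σ of D(ρ,σ), the maximal coherence over unitaries satisfies sup_U C(UρU†) = D(ρ, I/d), attained at the state ρ_max = Σₙ pₙ|n₊⟩⟨nₙ₊| where {pₙ} is the spectrum of ρ and {|n₊⟩} is a mutually unbiased basis. -/
open Matrix BigOperators
open scoped ComplexOrder

noncomputable section

section Helpers

variable {d : ℕ}

lemma unit_mul (U : Matrix (Fin d) (Fin d) ℂ) (hU : U ∈ Matrix.unitaryGroup (Fin d) ℂ) :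
    Uᴴ * U = 1 := by
  simpa [Matrix.star_eq_conjTranspose] using Matrix.mem_unitaryGroup_iff'.mp hU

lemma mul_unit (U : Matrix (Fin d) (Fin d) ℂ) (hU : U ∈ Matrix.unitaryGroup (Fin d) ℂ) :
    U * Uᴴ = 1 := by
  simpa [Matrix.star_eq_conjTranspose] using Matrix.mem_unitaryGroup_iff.mp hU

lemma density_conj {ρ U : Matrix (Fin d) (Fin d) ℂ}
    (hρ : IsDensity ρ) (hU : U ∈ Matrix.unitaryGroup (Fin d) ℂ) :
    IsDensity (U * ρ * Uᴴ) := by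
  refine ⟨hρ.1.mul_mul_conjTranspose_same U, ?_⟩
  rw [Matrix.trace_mul_cycle, unit_mul U hU, Matrix.one_mul, hρ.2]

lemma channel_conj {U : Matrix (Fin d) (Fin d) ℂ} (hU : U ∈ Matrix.unitaryGroup (Fin d) ℂ) :
    IsChannel (fun X : Matrix (Fin d) (Fin d) ℂ => U * X * Uᴴ) := by
  refine ⟨1, fun _ => U, ?_, fun ρ => ?_⟩
  · simp [unit_mul U hU]
  · simp

lemma D_conj (D : Matrix (Fin d) (Fin d) ℂ → Matrix (Fin d) (Fin d) ℂ → ℝ)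
    (hDcontr : ∀ Λ : Matrix (Fin d) (Fin d) ℂ → Matrix (Fin d) (Fin d) ℂ,
      IsChannel Λ → ∀ ρ σ, IsDensity ρ → IsDensity σ → D (Λ ρ) (Λ σ) ≤ D ρ σ)
    {ρ σ U : Matrix (Fin d) (Fin d) ℂ} (hρ : IsDensity ρ) (hσ : IsDensity σ)
    (hU : U ∈ Matrix.unitaryGroup (Fin d) ℂ) :
    D (U * ρ * Uᴴ) (U * σ * Uᴴ) = D ρ σ := by
  have h1 := hDcontr _ (channel_conj hU) ρ σ hρ hσ
  have hU' : Uᴴ ∈ Matrix.unitaryGroup (Fin d) ℂ := by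
    simpa [Matrix.star_eq_conjTranspose] using Unitary.star_mem hU
  have h2 := hDcontr _ (channel_conj hU') (U * ρ * Uᴴ) (U * σ * Uᴴ)
    (density_conj hρ hU) (density_conj hσ hU)
  simp only [conjTranspose_conjTranspose] at h2
  have key : ∀ X : Matrix (Fin d) (Fin d) ℂ, Uᴴ * (U * X * Uᴴ) * U = X := by
    intro X
    calc Uᴴ * (U * X * Uᴴ) * U = (Uᴴ * U) * X * (Uᴴ * U) := by noncomm_ring
    _ = X := by rw [unit_mul U hU]; simp
  rw [key ρ, key σ] at h2
  exact le_antisymm h1 h2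

lemma vmm_mul (a c e : Fin d → ℂ) (bb : Fin d → ℂ) :
    vecMulVec a bb * vecMulVec c e = (bb ⬝ᵥ c) • vecMulVec a e := by
  ext i j
  simp only [Matrix.mul_apply, vecMulVec_apply, Matrix.smul_apply, dotProduct, smul_eq_mul,
    Finset.sum_mul]
  congr 1; ext k; ring

lemma vmm_herm (a : Fin d → ℂ) : (vecMulVec a (star a))ᴴ = vecMulVec a (star a) := by
  ext i j
  simp [vecMulVec_apply, conjTranspose_apply, mul_comm]

lemma complete (b : Fin d → Fin d → ℂ)
    (hortho : ∀ n m, star (b n) ⬝ᵥ b m = if n = m then 1 else 0) :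
    (∑ n, vecMulVec (b n) (star (b n))) = 1 := by
  set B : Matrix (Fin d) (Fin d) ℂ := Matrix.of (fun i n => b n i) with hB
  have h1 : Bᴴ * B = 1 := by
    ext n m
    simp only [Matrix.mul_apply, conjTranspose_apply, hB, Matrix.of_apply, Matrix.one_apply]
    have := hortho n m
    simpa [dotProduct] using this
  have h2 : B * Bᴴ = 1 := mul_eq_one_comm.mp h1
  ext i j
  rw [← h2]
  simp [Matrix.sum_apply, Matrix.mul_apply, vecMulVec_apply, hB, conjTranspose_apply]

lemma maxmix_density (hd : 0 < d) :
    IsDensity ((d : ℂ)⁻¹ • (1 : Matrix (Fin d) (Fin d) ℂ)) ∧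
    ((d : ℂ)⁻¹ • (1 : Matrix (Fin d) (Fin d) ℂ)).IsDiag := by
  have hdc : (d : ℂ) ≠ 0 := Nat.cast_ne_zero.mpr hd.ne'
  refine ⟨⟨?_, ?_⟩, ?_⟩
  · have : ((d : ℂ)⁻¹ • (1 : Matrix (Fin d) (Fin d) ℂ)) =
        Matrix.diagonal (fun _ => (d : ℂ)⁻¹) := by
      ext i j; by_cases h : i = j <;> simp [h, Matrix.one_apply, Matrix.diagonal_apply]
    rw [this]
    refine Matrix.posSemidef_diagonal_iff.mpr fun i => ?_
    rw [show ((d:ℂ)⁻¹ : ℂ) = ((d:ℝ)⁻¹ : ℝ) by push_cast; ring]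
    rw [Complex.zero_le_real]
    positivity
  · simp [Matrix.trace_smul, Matrix.trace_one, hdc]
  · intro i j h; simp [Matrix.one_apply, h]

lemma mul_vmm (σ : Matrix (Fin d) (Fin d) ℂ) (c e : Fin d → ℂ) :
    σ * vecMulVec c e = vecMulVec (σ *ᵥ c) e := by
  ext i j
  simp only [Matrix.mul_apply, vecMulVec_apply, mulVec, dotProduct, Finset.sum_mul]
  congr 1; ext k; ring

lemma kmul (b : Fin d → Fin d → ℂ)
    (hortho : ∀ n m, star (b n) ⬝ᵥ b m = if n = m then 1 else 0) (m n : Fin d) :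
    vecMulVec (b m) (star (b m)) * vecMulVec (b n) (star (b n)) =
      (if m = n then (1:ℂ) else 0) • vecMulVec (b m) (star (b n)) := by
  rw [vmm_mul, hortho]

lemma dephase_channel (b : Fin d → Fin d → ℂ)
    (hortho : ∀ n m, star (b n) ⬝ᵥ b m = if n = m then 1 else 0) :
    IsChannel (fun X : Matrix (Fin d) (Fin d) ℂ =>
      ∑ n, vecMulVec (b n) (star (b n)) * X * (vecMulVec (b n) (star (b n)))ᴴ) := by
  refine ⟨d, fun n => vecMulVec (b n) (star (b n)), ?_, fun X => rfl⟩
  rw [← complete b hortho]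
  congr 1; ext n
  rw [vmm_herm, kmul b hortho n n]
  simp

lemma dephase_fix (b : Fin d → Fin d → ℂ)
    (hortho : ∀ n m, star (b n) ⬝ᵥ b m = if n = m then 1 else 0) (p : Fin d → ℝ) :
    (∑ m, vecMulVec (b m) (star (b m)) *
        (∑ n, (p n : ℂ) • vecMulVec (b n) (star (b n))) * (vecMulVec (b m) (star (b m)))ᴴ)
      = ∑ n, (p n : ℂ) • vecMulVec (b n) (star (b n)) := by
  have key : ∀ m n, vecMulVec (b m) (star (b m)) * vecMulVec (b n) (star (b n)) *
      vecMulVec (b m) (star (b m)) = (if m = n then (1:ℂ) else 0) • vecMulVec (b m) (star (b m)) := by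
    intro m n
    rw [kmul b hortho m n, smul_mul_assoc, vmm_mul, hortho]
    by_cases h : m = n
    · subst h; simp
    · simp [h, Ne.symm h]
  calc (∑ m, vecMulVec (b m) (star (b m)) *
        (∑ n, (p n : ℂ) • vecMulVec (b n) (star (b n))) * (vecMulVec (b m) (star (b m)))ᴴ)
      = ∑ m, ∑ n, (p n : ℂ) • (vecMulVec (b m) (star (b m)) * vecMulVec (b n) (star (b n)) *
          vecMulVec (b m) (star (b m))) := by
        refine Finset.sum_congr rfl fun m _ => ?_
        rw [vmm_herm, Finset.mul_sum, Finset.sum_mul]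
        refine Finset.sum_congr rfl fun n _ => ?_
        rw [mul_smul_comm, smul_mul_assoc]
    _ = ∑ n, (p n : ℂ) • vecMulVec (b n) (star (b n)) := by
        refine Finset.sum_congr rfl fun m _ => ?_
        simp only [key]
        rw [Finset.sum_eq_single m]
        · simp
        · intro n _ hn; simp [Ne.symm hn]
        · intro h; simp at h

lemma dephase_diag (hd : 0 < d) (b : Fin d → Fin d → ℂ)
    (hmub : ∀ i n, ‖b n i‖ ^ 2 = (d : ℝ)⁻¹)
    (hortho : ∀ n m, star (b n) ⬝ᵥ b m = if n = m then 1 else 0)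
    {σ : Matrix (Fin d) (Fin d) ℂ} (hσ : IsDensity σ) (hdiag : σ.IsDiag) :
    (∑ m, vecMulVec (b m) (star (b m)) * σ * (vecMulVec (b m) (star (b m)))ᴴ)
      = (d : ℂ)⁻¹ • (1 : Matrix (Fin d) (Fin d) ℂ) := by
  have key : ∀ m, vecMulVec (b m) (star (b m)) * σ * (vecMulVec (b m) (star (b m)))ᴴ
      = (d : ℂ)⁻¹ • vecMulVec (b m) (star (b m)) := by
    intro m
    rw [vmm_herm, Matrix.mul_assoc, mul_vmm, vmm_mul]
    congr 1
    have hsum : star (b m) ⬝ᵥ (σ *ᵥ b m) = ∑ i, σ i i * ((d:ℂ)⁻¹) := by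
      simp only [dotProduct, mulVec, dotProduct, Pi.star_apply]
      refine Finset.sum_congr rfl fun i _ => ?_
      rw [Finset.sum_eq_single i]
      · have habs : star (b m i) * b m i = (d : ℂ)⁻¹ := by
          have h1 : star (b m i) * b m i = ((‖b m i‖ ^ 2 : ℝ) : ℂ) := by
            rw [Complex.sq_norm]
            simp [Complex.normSq_eq_conj_mul_self]
          rw [h1, hmub i m]
          push_cast; ring
        calc star (b m i) * (σ i i * b m i) = σ i i * (star (b m i) * b m i) := by ring
          _ = σ i i * (d : ℂ)⁻¹ := by rw [habs]
      · intro k _ hk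
        rw [hdiag (Ne.symm hk)]
        simp
      · intro h; simp at h
    rw [hsum, ← Finset.sum_mul]
    have : (∑ i, σ i i) = 1 := hσ.2
    rw [this, one_mul]
  calc (∑ m, vecMulVec (b m) (star (b m)) * σ * (vecMulVec (b m) (star (b m)))ᴴ)
      = ∑ m, (d : ℂ)⁻¹ • vecMulVec (b m) (star (b m)) := Finset.sum_congr rfl fun m _ => key m
    _ = (d : ℂ)⁻¹ • ∑ m, vecMulVec (b m) (star (b m)) := by rw [Finset.smul_sum]
    _ = (d : ℂ)⁻¹ • (1 : Matrix (Fin d) (Fin d) ℂ) := by rw [complete b hortho]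

end Helpers

/-- for the distance-based coherence monotone of a contractive distance `D`,
`sup_U C(UρU†) = D(ρ, I/d)`, and the supremum is attained at the maximally coherent mixed
state `ρ_max = Σₙ pₙ|n₊⟩⟨n₊|` built from the spectrum `{pₙ}` of `ρ` and a mutually
unbiased basis `{|n₊⟩}`. -/
theorem max_coherence_eq_distance_purity (d : ℕ) (hd : 0 < d)
    (D : Matrix (Fin d) (Fin d) ℂ → Matrix (Fin d) (Fin d) ℂ → ℝ)
    (hD0 : ∀ ρ σ, 0 ≤ D ρ σ)
    (hDcontr : ∀ Λ : Matrix (Fin d) (Fin d) ℂ → Matrix (Fin d) (Fin d) ℂ,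
      IsChannel Λ → ∀ ρ σ, IsDensity ρ → IsDensity σ → D (Λ ρ) (Λ σ) ≤ D ρ σ)
    (b : Fin d → Fin d → ℂ)
    (hortho : ∀ n m, star (b n) ⬝ᵥ b m = if n = m then 1 else 0)
    (hmub : ∀ i n, ‖b n i‖ ^ 2 = (d : ℝ)⁻¹)
    (p : Fin d → ℝ) (hp0 : ∀ n, 0 ≤ p n) (hp1 : ∑ n, p n = 1)
    (ρmax : Matrix (Fin d) (Fin d) ℂ)
    (hρmax : ρmax = ∑ n, (p n : ℂ) • vecMulVec (b n) (star (b n)))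
    (ρ : Matrix (Fin d) (Fin d) ℂ) (hρ : IsDensity ρ)
    (hspec : ∃ V ∈ Matrix.unitaryGroup (Fin d) ℂ, ρ = V * ρmax * Vᴴ) :
    sSup {x | ∃ U ∈ Matrix.unitaryGroup (Fin d) ℂ,
        x = sInf {y | ∃ σ, IsDensity σ ∧ σ.IsDiag ∧ y = D (U * ρ * Uᴴ) σ}} =
      D ρ ((d : ℂ)⁻¹ • (1 : Matrix (Fin d) (Fin d) ℂ)) ∧
    sInf {y | ∃ σ, IsDensity σ ∧ σ.IsDiag ∧ y = D ρmax σ} =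
      D ρ ((d : ℂ)⁻¹ • (1 : Matrix (Fin d) (Fin d) ℂ)) := by
  
  obtain ⟨V, hV, hρV⟩ := hspec
  obtain ⟨hIdens, hIdiag⟩ := maxmix_density (d := d) hd
  set Idd := (d : ℂ)⁻¹ • (1 : Matrix (Fin d) (Fin d) ℂ) with hId
  have hVH : Vᴴ ∈ Matrix.unitaryGroup (Fin d) ℂ := by
    simpa [Matrix.star_eq_conjTranspose] using Unitary.star_mem hV
  have hback : Vᴴ * ρ * (Vᴴ)ᴴ = ρmax := by
    rw [hρV, conjTranspose_conjTranspose]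
    calc Vᴴ * (V * ρmax * Vᴴ) * V = (Vᴴ * V) * ρmax * (Vᴴ * V) := by noncomm_ring
      _ = ρmax := by rw [unit_mul V hV]; simp
  have hρmaxd : IsDensity ρmax := by
    rw [← hback]; exact density_conj hρ hVH
  have hIdconj : ∀ U ∈ Matrix.unitaryGroup (Fin d) ℂ, U * Idd * Uᴴ = Idd := by
    intro U hU
    rw [hId, Matrix.mul_smul, Matrix.mul_one, Matrix.smul_mul, mul_unit U hU]
  -- D of conjugated state to Idd is invariant
  have hDinv : ∀ U ∈ Matrix.unitaryGroup (Fin d) ℂ, D (U * ρ * Uᴴ) Idd = D ρ Idd := by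
    intro U hU
    have := D_conj D hDcontr hρ hIdens hU
    rwa [hIdconj U hU] at this
  have hDmax : D ρmax Idd = D ρ Idd := by
    have := D_conj D hDcontr hρmaxd hIdens hV
    rw [hIdconj V hV, ← hρV] at this
    exact this.symm
  -- the inf claim
  have hinf : sInf {y | ∃ σ, IsDensity σ ∧ σ.IsDiag ∧ y = D ρmax σ} = D ρmax Idd := by
    apply le_antisymm
    · refine csInf_le ⟨0, ?_⟩ ⟨Idd, hIdens, hIdiag, rfl⟩
      rintro y ⟨σ, _, _, rfl⟩
      exact hD0 _ _
    · refine le_csInf ⟨_, Idd, hIdens, hIdiag, rfl⟩ ?_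
      rintro y ⟨σ, hσd, hσdiag, rfl⟩
      have hc := hDcontr _ (dephase_channel b hortho) ρmax σ hρmaxd hσd
      rw [dephase_diag hd b hmub hortho hσd hσdiag] at hc
      have hfix : (∑ n, vecMulVec (b n) (star (b n)) * ρmax * (vecMulVec (b n) (star (b n)))ᴴ)
          = ρmax := by
        conv_lhs => rw [hρmax]
        rw [dephase_fix b hortho p, ← hρmax]
      rw [hfix] at hc
      exact hc
  refine ⟨?_, hinf.trans hDmax⟩
  -- the sup claim
  have hub : ∀ x ∈ {x | ∃ U ∈ Matrix.unitaryGroup (Fin d) ℂ,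
      x = sInf {y | ∃ σ, IsDensity σ ∧ σ.IsDiag ∧ y = D (U * ρ * Uᴴ) σ}}, x ≤ D ρ Idd := by
    rintro x ⟨U, hU, rfl⟩
    calc sInf {y | ∃ σ, IsDensity σ ∧ σ.IsDiag ∧ y = D (U * ρ * Uᴴ) σ}
        ≤ D (U * ρ * Uᴴ) Idd := by
          refine csInf_le ⟨0, ?_⟩ ⟨Idd, hIdens, hIdiag, rfl⟩
          rintro y ⟨σ, _, _, rfl⟩
          exact hD0 _ _
      _ = D ρ Idd := hDinv U hU
  have hmem : D ρ Idd ∈ {x | ∃ U ∈ Matrix.unitaryGroup (Fin d) ℂ,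
      x = sInf {y | ∃ σ, IsDensity σ ∧ σ.IsDiag ∧ y = D (U * ρ * Uᴴ) σ}} := by
    refine ⟨Vᴴ, hVH, ?_⟩
    rw [hback, hinf, hDmax]
  exact le_antisymm (csSup_le ⟨_, hmem⟩ hub) (le_csSup ⟨_, hub⟩ hmem)
end
end

section
/- For density matrices ρ and σ of the same finite dimension, there exists a unital quantum channel Λ (i.e., Λ(I/d) = I/d) with Λ(ρ) = σ if and only if the spectrum of ρ majorizes the spectrum of σ. -/
open Matrix BigOperators
open scoped ComplexOrder

noncomputable section

/-- Majorization of (finitely supported) real vectors: equal total sums, and every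
partial sum of entries of `b` is dominated by a sum of equally many entries of `a`
(equivalently, sums of the `k` largest entries dominate). -/
def Majorizes {ι κ : Type*} [Fintype ι] [Fintype κ] (a : ι → ℝ) (b : κ → ℝ) : Prop :=
  (∑ i, a i = ∑ j, b j) ∧
  ∀ t : Finset κ, ∃ s : Finset ι, s.card = t.card ∧ ∑ j ∈ t, b j ≤ ∑ i ∈ s, a i

/-!
Both directions pass through doubly stochastic matrices acting on the eigenvalue vectors
`a` of `ρ` and `b` of `σ`. If `Λ` is a unital channel, `M j i = ⟪w j, Λ (v i v iᴴ) w j⟫`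
(eigenvectors `v` of `ρ`, `w` of `σ`) is doubly stochastic with `M a = b`, and applying any
doubly stochastic matrix to `a` gives a vector that `a` majorizes, by a fractional-knapsack
bound. Conversely, if `a` majorizes `b`, then `b` is a convex combination `∑ w π • (a ∘ π)`
of permutations of `a`: otherwise a hyperplane would separate `b` from those points, which
Abel summation along the decreasing orders of the normal vector and of `a` rules out. Such a
convex combination is realised by the mixed-unitary channel
`X ↦ ∑ w π • U π X (U π)ᴴ` with `U π = W Pπ Vᴴ`, which is unital.
-/

open Finset

section Majorization

variable {ι : Type*}

theorem forall_le_of_mem_map_filter_lt {n : ℕ} {a : ι → ℝ} {e : Fin n ≃ ι}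
    (he : Antitone (a ∘ e)) (m : ℕ) :
    ∀ i ∈ ({k | k.val < m} : Finset (Fin n)).map e.toEmbedding,
      ∀ j ∉ ({k | k.val < m} : Finset (Fin n)).map e.toEmbedding, a j ≤ a i := by
  intro i hi j hj
  obtain ⟨k, hk, rfl⟩ := mem_map.1 hi
  have hl : ¬ (e.symm j).val < m := fun h ↦ hj (mem_map.2 ⟨e.symm j, by simpa using h, by simp⟩)
  have hkl : k ≤ e.symm j := Fin.le_def.2 (by simp at hk; omega)
  simpa using he hkl

variable [Fintype ι]

theorem exists_equiv_fin_antitone (x : ι → ℝ) :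
    ∃ e : Fin (Fintype.card ι) ≃ ι, Antitone (x ∘ e) := by
  set e₀ := (Fintype.equivFin ι).symm
  refine ⟨(Tuple.sort fun k ↦ -x (e₀ k)).trans e₀, fun i j hij ↦ ?_⟩
  have := Tuple.monotone_sort (fun k ↦ -x (e₀ k)) hij
  simp only [Function.comp_apply, Equiv.trans_apply] at this ⊢
  linarith

theorem mul_sum_le_sum_mul_of_forall_sum_lt_nonneg :
    ∀ {n : ℕ} {f z : Fin n → ℝ} {θ : ℝ}, Antitone f → (∀ k, θ ≤ f k) →
      (∀ m : ℕ, 0 ≤ ∑ k : Fin n with k.val < m, z k) → θ * ∑ k, z k ≤ ∑ k, f k * z k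
  | 0, _, _, _, _, _, _ => by simp
  | n + 1, f, z, θ, hf, hθ, hz => by
    have hinit : ∀ m : ℕ, ∑ k : Fin n with k.val < m, z k.castSucc =
        ∑ k : Fin (n + 1) with k.val < min m n, z k := by
      intro m
      rw [sum_filter, sum_filter, Fin.sum_univ_castSucc]
      simp only [Fin.val_castSucc, Fin.val_last, lt_min_iff, lt_irrefl, and_false, if_false,
        add_zero]
      exact sum_congr rfl fun k _ ↦ by simp [k.isLt]
    have ih := mul_sum_le_sum_mul_of_forall_sum_lt_nonneg (f := f ∘ Fin.castSucc)
      (z := z ∘ Fin.castSucc) (θ := f (Fin.last n))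
      (hf.comp_monotone Fin.strictMono_castSucc.monotone) (fun k ↦ hf (Fin.le_last _))
      fun m ↦ (hinit m).symm ▸ hz _
    have htot : 0 ≤ ∑ k, z k := by simpa [sum_filter, Fin.is_le] using hz (n + 1)
    simp only [Function.comp_apply] at ih
    calc θ * ∑ k, z k ≤ f (Fin.last n) * ∑ k, z k := mul_le_mul_of_nonneg_right (hθ _) htot
      _ = f (Fin.last n) * ∑ k : Fin n, z k.castSucc + f (Fin.last n) * z (Fin.last n) := by
        rw [Fin.sum_univ_castSucc, mul_add]
      _ ≤ ∑ k : Fin n, f k.castSucc * z k.castSucc + f (Fin.last n) * z (Fin.last n) := by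
        gcongr
      _ = ∑ k, f k * z k := (Fin.sum_univ_castSucc fun k ↦ f k * z k).symm

theorem sum_mul_le_sum_mul_of_forall_sum_lt_le {n : ℕ} {f x y : Fin n → ℝ} (hf : Antitone f)
    (hxy : ∀ m : ℕ, ∑ k : Fin n with k.val < m, x k ≤ ∑ k : Fin n with k.val < m, y k)
    (hsum : ∑ k, x k = ∑ k, y k) : ∑ k, f k * x k ≤ ∑ k, f k * y k := by
  obtain ⟨θ, hθ⟩ := (Set.finite_range f).bddBelow
  have := mul_sum_le_sum_mul_of_forall_sum_lt_nonneg (z := y - x) hf (fun k ↦ hθ ⟨k, rfl⟩)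
    fun m ↦ by simpa [sum_sub_distrib] using hxy m
  simp only [Pi.sub_apply, mul_sub, sum_sub_distrib, hsum, sub_self, mul_zero] at this
  linarith

theorem sum_mul_le_sum_of_forall_le {a γ : ι → ℝ} {s : Finset ι}
    (hs : ∀ i ∈ s, ∀ j ∉ s, a j ≤ a i) (hγ₀ : ∀ i, 0 ≤ γ i) (hγ₁ : ∀ i, γ i ≤ 1)
    (hγ : ∑ i, γ i = #s) : ∑ i, γ i * a i ≤ ∑ i ∈ s, a i := by
  classical
  obtain ⟨θ, hθs, hθ⟩ : ∃ θ, (∀ i ∈ s, θ ≤ a i) ∧ ∀ j ∉ s, a j ≤ θ := by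
    rcases s.eq_empty_or_nonempty with rfl | hne
    · obtain ⟨θ, hθ⟩ := (Set.finite_range a).bddAbove
      exact ⟨θ, by simp, fun j _ ↦ hθ ⟨j, rfl⟩⟩
    · exact ⟨s.inf' hne a, fun i hi ↦ s.inf'_le a hi,
        fun j hj ↦ s.le_inf' hne a fun i hi ↦ hs i hi j hj⟩
  -- `θ` separates the values of `a` on `s` from those off `s`, so every term below is `≤ 0`
  have hsplit : ∑ i, γ i * a i - ∑ i ∈ s, a i =
      ∑ i, (γ i - if i ∈ s then 1 else 0) * (a i - θ) := by
    simp only [sub_mul, mul_sub, ite_mul, one_mul, zero_mul, sum_sub_distrib, sum_ite_mem,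
      univ_inter, ← sum_mul, hγ, sum_const, nsmul_eq_mul]
    ring
  have hterm : ∀ i, (γ i - if i ∈ s then 1 else 0) * (a i - θ) ≤ 0 := by
    intro i
    split_ifs with hi
    · exact mul_nonpos_of_nonpos_of_nonneg (by linarith [hγ₁ i]) (by linarith [hθs i hi])
    · exact mul_nonpos_of_nonneg_of_nonpos (by linarith [hγ₀ i]) (by linarith [hθ i hi])
  linarith [sum_nonpos fun i (_ : i ∈ univ) ↦ hterm i]

theorem Majorizes.of_mem_doublyStochastic [DecidableEq ι] {M : Matrix ι ι ℝ}
    (hM : M ∈ doublyStochastic ℝ ι) (a : ι → ℝ) : Majorizes a (M *ᵥ a) := by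
  refine ⟨(sum_mulVec_of_mem_doublyStochastic hM).symm, fun t ↦ ?_⟩
  obtain ⟨e, he⟩ := exists_equiv_fin_antitone a
  refine ⟨({k | k.val < #t} : Finset (Fin _)).map e.toEmbedding, ?_, ?_⟩
  · simp [Fin.card_filter_val_lt, t.card_le_univ]
  calc ∑ j ∈ t, (M *ᵥ a) j = ∑ i, (∑ j ∈ t, M j i) * a i := by
        simp only [mulVec, dotProduct, sum_mul]
        exact sum_comm
    _ ≤ _ := by
      refine sum_mul_le_sum_of_forall_le (forall_le_of_mem_map_filter_lt he _)
        (fun i ↦ sum_nonneg fun j _ ↦ nonneg_of_mem_doublyStochastic hM)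
        (fun i ↦ (sum_le_univ_sum_of_nonneg fun j ↦ nonneg_of_mem_doublyStochastic hM).trans
          (sum_col_of_mem_doublyStochastic hM i).le) ?_
      rw [sum_comm]
      simp [sum_row_of_mem_doublyStochastic hM, Fin.card_filter_val_lt, t.card_le_univ]

theorem Majorizes.exists_perm_sum_mul_le {a b : ι → ℝ} (h : Majorizes a b) (c : ι → ℝ) :
    ∃ π : Equiv.Perm ι, ∑ i, b i * c i ≤ ∑ i, a (π i) * c i := by
  obtain ⟨e, he⟩ := exists_equiv_fin_antitone c
  obtain ⟨g, hg⟩ := exists_equiv_fin_antitone a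
  refine ⟨e.symm.trans g, ?_⟩
  rw [← Equiv.sum_comp e, ← Equiv.sum_comp e (fun i ↦ a _ * c i)]
  simp only [Equiv.trans_apply, Equiv.symm_apply_apply, mul_comm _ (c (e _))]
  refine sum_mul_le_sum_mul_of_forall_sum_lt_le he (fun m ↦ ?_) ?_
  · classical
    set T : Finset (Fin _) := {k | k.val < m}
    obtain ⟨s, hs, hle⟩ := h.2 (T.map e.toEmbedding)
    calc ∑ k ∈ T, b (e k) = ∑ i ∈ T.map e.toEmbedding, b i := by simp [T]
      _ ≤ ∑ i ∈ s, a i := hle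
      _ = ∑ i, (if i ∈ s then 1 else 0) * a i := by simp [ite_mul, sum_ite_mem]
      _ ≤ ∑ i ∈ T.map g.toEmbedding, a i :=
        sum_mul_le_sum_of_forall_le (forall_le_of_mem_map_filter_lt hg m)
          (fun i ↦ by split_ifs <;> norm_num) (fun i ↦ by split_ifs <;> norm_num)
          (by simp [hs])
      _ = ∑ k ∈ T, a (g k) := by simp [T]
  · rw [Equiv.sum_comp e b, Equiv.sum_comp g a, h.1]

theorem Majorizes.exists_mem_stdSimplex_sum_smul_eq [DecidableEq ι] {a b : ι → ℝ}
    (h : Majorizes a b) : ∃ w ∈ stdSimplex ℝ (Equiv.Perm ι), ∑ π, w π • (a ∘ π) = b := by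
  set L := Fintype.linearCombination ℝ fun π : Equiv.Perm ι ↦ a ∘ π
  suffices b ∈ L '' stdSimplex ℝ _ by
    obtain ⟨w, hw, rfl⟩ := this
    exact ⟨w, hw, (Fintype.linearCombination_apply ℝ _ w).symm⟩
  by_contra hb
  obtain ⟨f, u, hfS, hfb⟩ := geometric_hahn_banach_closed_point
    ((convex_stdSimplex ℝ _).linear_image L)
    ((isCompact_stdSimplex ℝ _).image L.continuous_of_finiteDimensional).isClosed hb
  obtain ⟨π, hπ⟩ := h.exists_perm_sum_mul_le fun i ↦ f fun j ↦ if i = j then 1 else 0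
  have hπS : a ∘ π ∈ L '' stdSimplex ℝ _ :=
    ⟨Pi.single π 1, single_mem_stdSimplex ℝ π, by simp [L, Fintype.linearCombination_apply]⟩
  have hfπ := hfS _ hπS
  rw [← ContinuousLinearMap.coe_coe, LinearMap.pi_apply_eq_sum_univ] at hfπ hfb
  simp only [smul_eq_mul, Function.comp_apply, ContinuousLinearMap.coe_coe] at hfπ hfb
  linarith

end Majorization

section Unitary

variable {n R : Type*} [Fintype n] [DecidableEq n] [CommRing R] [StarRing R]

theorem Matrix.permMatrix_mem_unitary (π : Equiv.Perm n) :
    π.permMatrix R ∈ unitary (Matrix n n R) := by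
  simp [Unitary.mem_iff, star_eq_conjTranspose, ← permMatrix_mul]

theorem Matrix.conjStarAlgAut_permMatrix_diagonal (π : Equiv.Perm n) (d : n → R) :
    Unitary.conjStarAlgAut R _ ⟨π.permMatrix R, permMatrix_mem_unitary π⟩ (diagonal d) =
      diagonal (d ∘ π) := by
  simp [Unitary.conjStarAlgAut_apply, star_eq_conjTranspose, PEquiv.toMatrix_toPEquiv_mul,
    PEquiv.mul_toMatrix_toPEquiv, Equiv.Perm.inv_def, submatrix_diagonal_equiv]

theorem Matrix.trace_conjStarAlgAut (U : unitary (Matrix n n R)) (X : Matrix n n R) :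
    (Unitary.conjStarAlgAut R _ U X).trace = X.trace := by
  rw [Unitary.conjStarAlgAut_apply, trace_mul_cycle, Unitary.coe_star_mul_self, Matrix.one_mul]

end Unitary

section Channel

variable {m n : Type*} [Fintype m] [Fintype n] [DecidableEq m]

theorem isChannel_of_sum_conjTranspose_mul_eq_one {κ : Type*} [Fintype κ]
    (K : κ → Matrix n m ℂ) (hK : (∑ i, (K i)ᴴ * K i) = 1) :
    IsChannel fun X : Matrix m m ℂ ↦ ∑ i, K i * X * (K i)ᴴ := by
  set e := (Fintype.equivFin κ).symm
  exact ⟨_, K ∘ e, (Equiv.sum_comp e _).trans hK, fun X ↦ (Equiv.sum_comp e _).symm⟩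

variable {Λ : Matrix m m ℂ → Matrix n n ℂ}

theorem IsChannel.map_sum_smul (hΛ : IsChannel Λ) {ι : Type*} [Fintype ι] (c : ι → ℂ)
    (X : ι → Matrix m m ℂ) : Λ (∑ i, c i • X i) = ∑ i, c i • Λ (X i) := by
  obtain ⟨k, K, -, hK⟩ := hΛ
  simp only [hK, Matrix.mul_sum, Matrix.sum_mul, Finset.smul_sum, Matrix.mul_smul,
    Matrix.smul_mul]
  exact Finset.sum_comm

theorem IsChannel.posSemidef (hΛ : IsChannel Λ) {X : Matrix m m ℂ} (hX : X.PosSemidef) :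
    (Λ X).PosSemidef := by
  obtain ⟨k, K, -, hK⟩ := hΛ
  rw [hK]
  exact posSemidef_sum _ fun i _ ↦ hX.mul_mul_conjTranspose_same (K i)

theorem IsChannel.trace_eq (hΛ : IsChannel Λ) (X : Matrix m m ℂ) : (Λ X).trace = X.trace := by
  obtain ⟨k, K, hK₁, hK⟩ := hΛ
  simp_rw [hK, trace_sum, trace_mul_cycle _ X, ← trace_sum, ← Finset.sum_mul, hK₁, Matrix.one_mul]

theorem isChannel_sum_smul_conjStarAlgAut [DecidableEq n] {κ : Type*} [Fintype κ] {w : κ → ℝ}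
    (hw : w ∈ stdSimplex ℝ κ) (U : κ → unitary (Matrix n n ℂ)) :
    IsChannel fun X ↦ ∑ k, (w k : ℂ) • Unitary.conjStarAlgAut ℂ _ (U k) X := by
  set K : κ → Matrix n n ℂ := fun k ↦ (√(w k) : ℂ) • (U k : Matrix n n ℂ)
  have hK : ∀ k X, (w k : ℂ) • Unitary.conjStarAlgAut ℂ _ (U k) X = K k * X * (K k)ᴴ :=
    fun k X ↦ by
      simp [K, Unitary.conjStarAlgAut_apply, smul_smul, Real.mul_self_sqrt (hw.1 k),
        star_eq_conjTranspose]
  simp_rw [hK]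
  refine isChannel_of_sum_conjTranspose_mul_eq_one K ?_
  simp [K, smul_smul, Real.mul_self_sqrt (hw.1 _), ← star_eq_conjTranspose, ← Finset.sum_smul,
    hw.2]

end Channel

section UnitalChannel

variable {n : Type*} [Fintype n] [DecidableEq n] {ρ σ : Matrix n n ℂ}

theorem IsChannel.exists_mem_doublyStochastic_mulVec_eigenvalues_eq
    {Λ : Matrix n n ℂ → Matrix n n ℂ} (hΛ : IsChannel Λ) (hunital : Λ 1 = 1)
    (hρ : ρ.IsHermitian) (hσ : σ.IsHermitian) (hρσ : Λ ρ = σ) :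
    ∃ M ∈ doublyStochastic ℝ n, M *ᵥ hρ.eigenvalues = hσ.eigenvalues := by
  set conj := Unitary.conjStarAlgAut ℂ (Matrix n n ℂ)
  set V := hρ.eigenvectorUnitary
  set W := hσ.eigenvectorUnitary
  set P : n → Matrix n n ℂ := fun i ↦ conj V (diagonal (Pi.single i 1))
  set Y : n → Matrix n n ℂ := fun i ↦ conj (star W) (Λ (P i))
  have hY : ∀ c : n → ℝ,
      ∑ i, (c i : ℂ) • Y i = conj (star W) (Λ (conj V (diagonal fun i ↦ (c i : ℂ)))) := by
    intro c
    have hdiag : ∑ i, (c i : ℂ) • diagonal (Pi.single i 1) = diagonal fun i ↦ (c i : ℂ) := by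
      ext a b
      by_cases h : a = b <;> simp [h, Matrix.sum_apply, Matrix.smul_apply, Pi.single_apply]
    simp only [Y, P, ← hdiag, map_sum, map_smul, hΛ.map_sum_smul]
  refine ⟨fun j i ↦ (Y i j j).re, mem_doublyStochastic_iff_sum.2 ⟨fun j i ↦ ?_, fun j ↦ ?_,
    fun i ↦ ?_⟩, ?_⟩
  · have hP : (P i).PosSemidef :=
      (PosSemidef.diagonal fun j ↦ by by_cases h : j = i <;> simp [h]).mul_mul_conjTranspose_same _
    have hYi : (Y i).PosSemidef := by
      simpa [Y, conj, Unitary.conjStarAlgAut_apply, star_eq_conjTranspose] using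
        (hΛ.posSemidef hP).conjTranspose_mul_mul_same (W : Matrix n n ℂ)
    exact (Complex.nonneg_iff.1 hYi.diag_nonneg).1
  · have := congrArg (fun Z ↦ (Z j j).re) (hY 1)
    simpa [diagonal_one, hunital, ← Complex.re_sum, Matrix.sum_apply] using this
  · have : (Y i).trace = 1 := by
      rw [trace_conjStarAlgAut, hΛ.trace_eq, trace_conjStarAlgAut]
      simp
    simpa [trace, ← Complex.re_sum] using congrArg Complex.re this
  · funext j
    have hρV : conj V (diagonal fun i ↦ (hρ.eigenvalues i : ℂ)) = ρ := hρ.spectral_theorem.symm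
    have hσW : conj (star W) σ = diagonal fun i ↦ (hσ.eigenvalues i : ℂ) :=
      hσ.conjStarAlgAut_star_eigenvectorUnitary
    have := congrArg (fun Z ↦ (Z j j).re) (hY hρ.eigenvalues)
    simp only [hρV, hρσ, hσW, Matrix.sum_apply, Matrix.smul_apply, Complex.re_sum, smul_eq_mul,
      Complex.re_ofReal_mul, diagonal_apply_eq, Complex.ofReal_re] at this
    simpa [mulVec, dotProduct, mul_comm] using this

theorem exists_isChannel_of_sum_smul_eigenvalues_comp_eq (hρ : ρ.IsHermitian)
    (hσ : σ.IsHermitian) {w : Equiv.Perm n → ℝ} (hw : w ∈ stdSimplex ℝ (Equiv.Perm n))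
    (hwσ : ∑ π, w π • (hρ.eigenvalues ∘ π) = hσ.eigenvalues) :
    ∃ Λ : Matrix n n ℂ → Matrix n n ℂ, IsChannel Λ ∧ Λ 1 = 1 ∧ Λ ρ = σ := by
  set conj := Unitary.conjStarAlgAut ℂ (Matrix n n ℂ)
  set V := hρ.eigenvectorUnitary
  set W := hσ.eigenvectorUnitary
  set U : Equiv.Perm n → unitary (Matrix n n ℂ) := fun π ↦
    W * ⟨π.permMatrix ℂ, permMatrix_mem_unitary π⟩ * star V
  refine ⟨_, isChannel_sum_smul_conjStarAlgAut hw U, ?_, ?_⟩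
  · simp [← Finset.sum_smul, hw.2]
  have hUρ : ∀ π, conj (U π) ρ = conj W (diagonal fun i ↦ (hρ.eigenvalues (π i) : ℂ)) := by
    intro π
    rw [Unitary.conjStarAlgAut_mul_apply, Unitary.conjStarAlgAut_mul_apply,
      hρ.conjStarAlgAut_star_eigenvectorUnitary, conjStarAlgAut_permMatrix_diagonal]
    rfl
  have hdiag : ∑ π, (w π : ℂ) • diagonal (fun i ↦ (hρ.eigenvalues (π i) : ℂ)) =
      diagonal fun i ↦ (hσ.eigenvalues i : ℂ) := by
    ext i j
    by_cases h : i = j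
    · simp [h, Matrix.sum_apply, ← hwσ]
    · simp [h, Matrix.sum_apply]
  show ∑ π, (w π : ℂ) • conj (U π) ρ = σ
  simp_rw [hUρ, ← map_smul, ← map_sum, hdiag]
  exact hσ.spectral_theorem.symm

end UnitalChannel

theorem unital_channel_iff_majorizes_general (d : ℕ)
    (ρ σ : Matrix (Fin d) (Fin d) ℂ) (hρ : IsDensity ρ) (hσ : IsDensity σ) :
    (∃ Λ : Matrix (Fin d) (Fin d) ℂ → Matrix (Fin d) (Fin d) ℂ,
        IsChannel Λ ∧ Λ 1 = 1 ∧ Λ ρ = σ) ↔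
      Majorizes hρ.1.1.eigenvalues hσ.1.1.eigenvalues := by
  constructor
  · rintro ⟨Λ, hΛ, hunital, hρσ⟩
    obtain ⟨M, hM, hMρ⟩ :=
      hΛ.exists_mem_doublyStochastic_mulVec_eigenvalues_eq hunital hρ.1.1 hσ.1.1 hρσ
    exact hMρ ▸ Majorizes.of_mem_doublyStochastic hM _
  · intro h
    obtain ⟨w, hw, hwσ⟩ := h.exists_mem_stdSimplex_sum_smul_eq
    exact exists_isChannel_of_sum_smul_eigenvalues_comp_eq hρ.1.1 hσ.1.1 hw hwσ

/-- `ρ` can be converted into `σ` by a unital quantum channel if and only if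
the spectrum of `ρ` majorizes the spectrum of `σ`. -/
theorem unital_channel_iff_majorizes (d : ℕ) (hd : 0 < d)
    (ρ σ : Matrix (Fin d) (Fin d) ℂ) (hρ : IsDensity ρ) (hσ : IsDensity σ) :
    (∃ Λ : Matrix (Fin d) (Fin d) ℂ → Matrix (Fin d) (Fin d) ℂ,
        IsChannel Λ ∧ Λ 1 = 1 ∧ Λ ρ = σ) ↔
      Majorizes hρ.1.1.eigenvalues hσ.1.1.eigenvalues :=
  unital_channel_iff_majorizes_general d ρ σ hρ hσ
end
end

section
/- For any MIO coherence monotone C and any state ρ with maximally coherent mixed state ρ_max (same spectrum, diagonal in a mutually unbiased basis), the supremum of C over all unital channels applied to ρ equals C(ρ_max): sup_{Λ unital} C(Λ(ρ)) = C(ρ_max). -/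
/-!
Write `ρ = V ρmax V†` and let `Δ` be the dephasing `X ↦ ∑ₙ |bₙ⟩⟨bₙ| X |bₙ⟩⟨bₙ|` in the basis `b`,
which fixes `ρmax`. For a unital channel `Λ`, the channel `Φ = Λ ∘ Ad_V ∘ Δ` satisfies
`Φ ρmax = Λ ρ`. Since `b` is unbiased with respect to the incoherent basis, `Δ` sends every
diagonal matrix to a multiple of the identity, which the unital channel `Λ ∘ Ad_V` preserves;
hence `Φ` is MIO and `C (Λ ρ) ≤ C ρmax`. The bound is attained by the unital channel `Ad_{V†}`.
-/

open Matrix BigOperators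
open scoped ComplexOrder

noncomputable section

section Channels

variable {m n o : Type*} [Fintype m] [Fintype n] [Fintype o]

theorem isChannel_of_kraus [DecidableEq m] {ι : Type*} [Fintype ι] (K : ι → Matrix n m ℂ)
    (hK : (∑ i, (K i)ᴴ * K i) = 1) :
    IsChannel fun ρ : Matrix m m ℂ => ∑ i, K i * ρ * (K i)ᴴ := by
  let e := Fintype.equivFin ι
  refine ⟨Fintype.card ι, K ∘ e.symm, ?_, fun ρ => ?_⟩
  · rw [← hK]
    exact e.symm.sum_comp fun i => (K i)ᴴ * K i
  · exact (e.symm.sum_comp fun i => K i * ρ * (K i)ᴴ).symm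

theorem IsChannel.comp [DecidableEq m] [DecidableEq n] {Λ₁ : Matrix m m ℂ → Matrix n n ℂ}
    {Λ₂ : Matrix n n ℂ → Matrix o o ℂ} (h₁ : IsChannel Λ₁) (h₂ : IsChannel Λ₂) :
    IsChannel (Λ₂ ∘ Λ₁) := by
  obtain ⟨k, K, hK, hΛ₁⟩ := h₁
  obtain ⟨l, L, hL, hΛ₂⟩ := h₂
  have hcomp : Λ₂ ∘ Λ₁ =
      fun ρ => ∑ q : Fin k × Fin l, (L q.2 * K q.1) * ρ * (L q.2 * K q.1)ᴴ := by
    ext1 ρ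
    simp only [Function.comp_apply, hΛ₁, hΛ₂, Fintype.sum_prod_type_right, Matrix.mul_sum,
      Matrix.sum_mul, conjTranspose_mul, Matrix.mul_assoc]
  rw [hcomp]
  refine isChannel_of_kraus _ ?_
  simp only [conjTranspose_mul, Fintype.sum_prod_type, Matrix.mul_assoc, ← Matrix.mul_sum]
  simp only [← Matrix.mul_assoc, ← Matrix.sum_mul, hL, Matrix.one_mul, hK]

theorem IsChannel.map_smul [DecidableEq m] {Λ : Matrix m m ℂ → Matrix n n ℂ} (hΛ : IsChannel Λ)
    (c : ℂ) (X : Matrix m m ℂ) : Λ (c • X) = c • Λ X := by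
  obtain ⟨k, K, -, hΛ⟩ := hΛ
  simp only [hΛ, Finset.smul_sum, Matrix.mul_smul, Matrix.smul_mul]

theorem isChannel_unitary_conj [DecidableEq n] {U : Matrix n n ℂ}
    (hU : U ∈ unitaryGroup n ℂ) : IsChannel fun X => U * X * Uᴴ :=
  ⟨1, fun _ => U, by simpa [← star_eq_conjTranspose] using Unitary.star_mul_self_of_mem hU, by simp⟩

end Channels

section Dephasing

variable {n : Type*} [Fintype n] {b : n → n → ℂ}

theorem vecMulVec_mul_mul_vecMulVec (u : n → ℂ) (X : Matrix n n ℂ) :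
    vecMulVec u (star u) * X * vecMulVec u (star u) =
      (star u ⬝ᵥ X *ᵥ u) • vecMulVec u (star u) := by
  rw [vecMulVec_mul, vecMulVec_mul_vecMulVec, vecMulVec_smul, dotProduct_mulVec]

def dephase (b : n → n → ℂ) (X : Matrix n n ℂ) : Matrix n n ℂ :=
  ∑ i, vecMulVec (b i) (star (b i)) * X * vecMulVec (b i) (star (b i))

theorem dephase_eq_sum (b : n → n → ℂ) (X : Matrix n n ℂ) :
    dephase b X = ∑ i, (star (b i) ⬝ᵥ X *ᵥ b i) • vecMulVec (b i) (star (b i)) := by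
  simp only [dephase, vecMulVec_mul_mul_vecMulVec]

variable [DecidableEq n]

theorem sum_vecMulVec_star_eq_one (hortho : ∀ i j, star (b i) ⬝ᵥ b j = if i = j then 1 else 0) :
    ∑ i, vecMulVec (b i) (star (b i)) = 1 := by
  let B : Matrix n n ℂ := .of fun i => star (b i)
  have hB : B * Bᴴ = 1 := by
    ext i j
    simpa [B, mul_apply, dotProduct, Matrix.one_apply, mul_comm] using hortho i j
  have hB' : Bᴴ * B = 1 := mul_eq_one_comm.mp hB
  ext i j
  simpa [B, mul_apply, vecMulVec_apply, Matrix.sum_apply, mul_comm] using congrFun₂ hB' i j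

theorem isChannel_dephase (hortho : ∀ i j, star (b i) ⬝ᵥ b j = if i = j then 1 else 0) :
    IsChannel (dephase b) := by
  have hproj : ∀ i, (vecMulVec (b i) (star (b i)))ᴴ * vecMulVec (b i) (star (b i)) =
      vecMulVec (b i) (star (b i)) := by
    intro i
    rw [conjTranspose_vecMulVec, star_star, vecMulVec_mul_vecMulVec, hortho, if_pos rfl, one_smul]
  convert isChannel_of_kraus (fun i => vecMulVec (b i) (star (b i))) _ using 1
  · ext1 X
    simp only [dephase, conjTranspose_vecMulVec, star_star]
  · simp only [hproj, sum_vecMulVec_star_eq_one hortho]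

theorem dephase_sum_smul_vecMulVec (hortho : ∀ i j, star (b i) ⬝ᵥ b j = if i = j then 1 else 0)
    (c : n → ℂ) :
    dephase b (∑ j, c j • vecMulVec (b j) (star (b j))) =
      ∑ j, c j • vecMulVec (b j) (star (b j)) := by
  rw [dephase_eq_sum]
  congr! 2 with i
  simp [Matrix.sum_mulVec, vecMulVec_mulVec, Matrix.smul_mulVec, hortho]

theorem dephase_of_isDiag (hortho : ∀ i j, star (b i) ⬝ᵥ b j = if i = j then 1 else 0)
    {c : ℝ} (hmub : ∀ i j, ‖b j i‖ ^ 2 = c) {σ : Matrix n n ℂ} (hσ : σ.IsDiag) :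
    dephase b σ = ((c : ℂ) * σ.trace) • 1 := by
  have hcoeff : ∀ j, star (b j) ⬝ᵥ σ *ᵥ b j = c * σ.trace := by
    intro j
    rw [← hσ.diagonal_diag]
    simp only [dotProduct, mulVec_diagonal, trace_diagonal, Finset.mul_sum, Pi.star_apply]
    refine Finset.sum_congr rfl fun i _ => ?_
    rw [← hmub i j, Complex.ofReal_pow, ← Complex.conj_mul', Complex.star_def]
    ring
  rw [dephase_eq_sum, ← sum_vecMulVec_star_eq_one hortho, Finset.smul_sum]
  simp only [hcoeff]

theorem isMIO_comp_dephase (hortho : ∀ i j, star (b i) ⬝ᵥ b j = if i = j then 1 else 0)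
    {c : ℝ} (hmub : ∀ i j, ‖b j i‖ ^ 2 = c) {Λ : Matrix n n ℂ → Matrix n n ℂ}
    (hΛ : IsChannel Λ) (hΛ1 : Λ 1 = 1) : IsMIO (Λ ∘ dephase b) := by
  intro σ _ hσ
  rw [Function.comp_apply, dephase_of_isDiag hortho hmub hσ, hΛ.map_smul, hΛ1]
  exact isDiag_smul_one n _

end Dephasing

theorem IsDensity.unitary_conj {n : Type*} [Fintype n] [DecidableEq n] {ρ U : Matrix n n ℂ}
    (hρ : IsDensity ρ) (hU : U ∈ unitaryGroup n ℂ) : IsDensity (U * ρ * Uᴴ) := by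
  refine ⟨hρ.1.mul_mul_conjTranspose_same U, ?_⟩
  rw [trace_mul_cycle, ← star_eq_conjTranspose, Unitary.star_mul_self_of_mem hU, Matrix.one_mul,
    hρ.2]

theorem sup_unital_coherence_eq_mcms_general (d : ℕ)
    (b : Fin d → Fin d → ℂ)
    (hortho : ∀ n m, star (b n) ⬝ᵥ b m = if n = m then 1 else 0)
    (hmub : ∀ i n, ‖b n i‖ ^ 2 = (d : ℝ)⁻¹)
    (p : Fin d → ℝ)
    (ρmax : Matrix (Fin d) (Fin d) ℂ)
    (hρmax : ρmax = ∑ n, (p n : ℂ) • vecMulVec (b n) (star (b n)))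
    (ρ : Matrix (Fin d) (Fin d) ℂ) (hρ : IsDensity ρ)
    (hrel : ∃ V ∈ Matrix.unitaryGroup (Fin d) ℂ, ρ = V * ρmax * Vᴴ)
    (C : Matrix (Fin d) (Fin d) ℂ → ℝ)
    (hCmono : ∀ Λ, IsChannel Λ → IsMIO Λ → ∀ τ, IsDensity τ → C (Λ τ) ≤ C τ) :
    sSup {x | ∃ Λ : Matrix (Fin d) (Fin d) ℂ → Matrix (Fin d) (Fin d) ℂ,
        IsChannel Λ ∧ Λ 1 = 1 ∧ x = C (Λ ρ)} = C ρmax := by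
  obtain ⟨V, hV, rfl⟩ := hrel
  have hV' : Vᴴ ∈ unitaryGroup (Fin d) ℂ := Unitary.star_mem hV
  have hV'V : Vᴴ * V = 1 := Unitary.star_mul_self_of_mem hV
  have hVV' : V * Vᴴ = 1 := Unitary.mul_star_self_of_mem hV
  have hback : Vᴴ * (V * ρmax * Vᴴ) * V = ρmax := by
    simp only [← Matrix.mul_assoc, hV'V, Matrix.one_mul]
    rw [Matrix.mul_assoc, hV'V, Matrix.mul_one]
  have hρmax_density : IsDensity ρmax := by
    simpa only [conjTranspose_conjTranspose, hback] using hρ.unitary_conj hV'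
  have hV'_channel : IsChannel fun X => Vᴴ * X * V := by
    simpa only [conjTranspose_conjTranspose] using isChannel_unitary_conj hV'
  refine IsGreatest.csSup_eq ⟨⟨_, hV'_channel, by simp only [Matrix.mul_one, hV'V],
    congrArg C hback.symm⟩, ?_⟩
  rintro _ ⟨Λ, hΛ, hΛ1, rfl⟩
  have hΛV : IsChannel (Λ ∘ fun X => V * X * Vᴴ) := (isChannel_unitary_conj hV).comp hΛ
  have hΛV1 : (Λ ∘ fun X => V * X * Vᴴ) 1 = 1 := by
    rw [Function.comp_apply, Matrix.mul_one, hVV', hΛ1]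
  calc C (Λ (V * ρmax * Vᴴ)) = C ((Λ ∘ fun X => V * X * Vᴴ) (dephase b ρmax)) := by
        rw [hρmax, dephase_sum_smul_vecMulVec hortho]; rfl
    _ ≤ C ρmax := hCmono _ ((isChannel_dephase hortho).comp hΛV)
        (isMIO_comp_dephase hortho hmub hΛV hΛV1) ρmax hρmax_density

/-- for any MIO coherence monotone `C` and any state `ρ` with maximally
coherent mixed state `ρ_max` (same spectrum, diagonal in a mutually unbiased basis), the
supremum of `C` over all unital channels applied to `ρ` equals `C(ρ_max)`. -/
theorem sup_unital_coherence_eq_mcms (d : ℕ) (hd : 0 < d)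
    (b : Fin d → Fin d → ℂ)
    (hortho : ∀ n m, star (b n) ⬝ᵥ b m = if n = m then 1 else 0)
    (hmub : ∀ i n, ‖b n i‖ ^ 2 = (d : ℝ)⁻¹)
    (p : Fin d → ℝ) (hp0 : ∀ n, 0 ≤ p n) (hp1 : ∑ n, p n = 1)
    (ρmax : Matrix (Fin d) (Fin d) ℂ)
    (hρmax : ρmax = ∑ n, (p n : ℂ) • vecMulVec (b n) (star (b n)))
    (ρ : Matrix (Fin d) (Fin d) ℂ) (hρ : IsDensity ρ)
    (hrel : ∃ V ∈ Matrix.unitaryGroup (Fin d) ℂ, ρ = V * ρmax * Vᴴ)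
    (C : Matrix (Fin d) (Fin d) ℂ → ℝ)
    (hC0 : ∀ τ, 0 ≤ C τ)
    (hCmono : ∀ Λ, IsChannel Λ → IsMIO Λ → ∀ τ, IsDensity τ → C (Λ τ) ≤ C τ) :
    sSup {x | ∃ Λ : Matrix (Fin d) (Fin d) ℂ → Matrix (Fin d) (Fin d) ℂ,
        IsChannel Λ ∧ Λ 1 = 1 ∧ x = C (Λ ρ)} = C ρmax :=
  sup_unital_coherence_eq_mcms_general d b hortho hmub p ρmax hρmax ρ hρ hrel C hCmono
end
end

section
/- For a single-qubit state ρ with off-diagonal element ρ₀₁, the two-qubit output ρ_out = U_CNOT (ρ ⊗ |0⟩⟨0|) U_CNOT† has negativity N(ρ_out) = |ρ₀₁|, i.e., half the l₁-norm of coherence of ρ. -/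
open Matrix BigOperators
open scoped ComplexOrder

noncomputable section

/-- The CNOT gate on two qubits (first qubit is the control):
`CNOT |c,t⟩ = |c, t + c⟩` (addition in `Fin 2`). -/
def CNOT : Matrix (Fin 2 × Fin 2) (Fin 2 × Fin 2) ℂ :=
  Matrix.of fun p q => if p.1 = q.1 ∧ p.2 = q.2 + q.1 then 1 else 0

/-- Partial transpose of a two-qubit matrix with respect to the second qubit. -/
def ptranspose (σ : Matrix (Fin 2 × Fin 2) (Fin 2 × Fin 2) ℂ) :
    Matrix (Fin 2 × Fin 2) (Fin 2 × Fin 2) ℂ :=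
  Matrix.of fun p q => σ (p.1, q.2) (q.1, p.2)

/-- The projector `|0⟩⟨0|` on a single qubit. -/
def e00 : Matrix (Fin 2) (Fin 2) ℂ :=
  Matrix.of fun i j => if i = 0 ∧ j = 0 then 1 else 0

/-- For a Hermitian matrix, `det (z•1 - A) = ∏ (z - λᵢ)`. -/
lemma aux_det_smul_one_sub {n : Type*} [Fintype n] [DecidableEq n]
    (A : Matrix n n ℂ) (hA : A.IsHermitian) (z : ℂ) :
    Matrix.det (z • 1 - A) = ∏ i, (z - (hA.eigenvalues i : ℂ)) := by
  set U : Matrix n n ℂ := ↑hA.eigenvectorUnitary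
  have hU1 : U * star U = 1 := Unitary.mul_star_self_of_mem hA.eigenvectorUnitary.2
  have hU2 : star U * U = 1 := Matrix.UnitaryGroup.star_mul_self _
  have key : z • (1 : Matrix n n ℂ) - A
      = U * (z • 1 - diagonal (RCLike.ofReal ∘ hA.eigenvalues)) * star U := by
    rw [Matrix.mul_sub, Matrix.sub_mul]
    congr 1
    · rw [Matrix.mul_smul, Matrix.mul_one, Matrix.smul_mul, hU1]
    · exact hA.spectral_theorem
  rw [key, Matrix.det_mul, Matrix.det_mul, mul_comm, ← mul_assoc, ← Matrix.det_mul, hU2,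
    Matrix.det_one, one_mul]
  have : z • (1 : Matrix n n ℂ) - diagonal (RCLike.ofReal ∘ hA.eigenvalues)
      = diagonal fun i => z - (hA.eigenvalues i : ℂ) := by
    rw [smul_eq_diagonal_mul, Matrix.mul_one, ← Matrix.diagonal_sub]
    rfl
  rw [this, Matrix.det_diagonal]

/-- for a single-qubit state `ρ`, the output
`ρ_out = CNOT (ρ ⊗ |0⟩⟨0|) CNOT†` has negativity `N(ρ_out) = |ρ₀₁|`, i.e. half the
`l₁`-norm of coherence of `ρ`. -/
theorem cnot_negativity_eq_coherence
    (ρ : Matrix (Fin 2) (Fin 2) ℂ) (hρ : IsDensity ρ)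
    (ρout : Matrix (Fin 2 × Fin 2) (Fin 2 × Fin 2) ℂ)
    (hout : ρout = CNOT * Matrix.kroneckerMap (· * ·) ρ e00 * CNOTᴴ)
    (hH : (ptranspose ρout).IsHermitian) :
    ∑ i, max (-(hH.eigenvalues i)) 0 = ‖ρ 0 1‖ := by
  obtain ⟨hPSD, _⟩ := hρ
  -- entries of the partial transpose
  have hA : ptranspose ρout = Matrix.of fun p q =>
      if p.2 = q.1 ∧ q.2 = p.1 then ρ p.1 q.1 else 0 := by
    subst hout
    ext ⟨p1, p2⟩ ⟨q1, q2⟩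
    simp only [ptranspose, Matrix.of_apply, Matrix.mul_apply, Matrix.conjTranspose_apply,
      CNOT, e00, Matrix.kroneckerMap_apply, Fintype.sum_prod_type, Fin.sum_univ_two]
    fin_cases p1 <;> fin_cases p2 <;> fin_cases q1 <;> fin_cases q2 <;> simp
  set c : ℝ := ‖ρ 0 1‖ with hc
  have hρ10 : ρ 1 0 = starRingEnd ℂ (ρ 0 1) := by
    have h := hPSD.1
    rw [Matrix.IsHermitian] at h
    conv_lhs => rw [← h]
    rfl
  -- explicit determinant computation
  have hdet : ∀ z : ℂ, ∏ i, (z - (hH.eigenvalues i : ℂ))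
      = (z - ρ 0 0) * (z - ρ 1 1) * ((z - (c:ℂ)) * (z + (c:ℂ))) := by
    intro z
    rw [← aux_det_smul_one_sub _ hH z]
    have hcc : (c:ℂ) * (c:ℂ) = ρ 0 1 * ρ 1 0 := by
      rw [hρ10, Complex.mul_conj, hc]
      norm_cast
      rw [← Complex.sq_norm]; ring
    rw [← Matrix.det_reindex_self finProdFinEquiv]
    have hM : (reindex finProdFinEquiv finProdFinEquiv) (z • 1 - ptranspose ρout)
        = !![z - ρ 0 0, 0, 0, 0; 0, z, -(ρ 0 1), 0; 0, -(ρ 1 0), z, 0;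
             0, 0, 0, z - ρ 1 1] := by
      rw [hA]
      ext i j
      fin_cases i <;> fin_cases j <;>
        norm_num [Matrix.one_apply, finProdFinEquiv, Fin.ext_iff, Prod.ext_iff, Fin.divNat,
          Fin.modNat, vecHead, vecTail]
    rw [hM]
    simp [Matrix.det_succ_row_zero, Fin.sum_univ_succ]
    linear_combination (z - ρ 0 0) * (z - ρ 1 1) * hcc
  -- the eigenvalue multiset
  have hmul : (Finset.univ.val.map fun i => (hH.eigenvalues i : ℂ))
      = {ρ 0 0, ρ 1 1, (c:ℂ), -(c:ℂ)} := by
    have hpq : ((Finset.univ.val.map fun i => (hH.eigenvalues i : ℂ)).map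
          fun r => Polynomial.X - Polynomial.C r).prod
        = (({ρ 0 0, ρ 1 1, (c:ℂ), -(c:ℂ)} : Multiset ℂ).map
          fun r => Polynomial.X - Polynomial.C r).prod := by
      apply Polynomial.funext
      intro z
      rw [Polynomial.eval_multiset_prod, Polynomial.eval_multiset_prod]
      simp only [Multiset.map_map, Function.comp_def, Polynomial.eval_sub, Polynomial.eval_X,
        Polynomial.eval_C, Multiset.insert_eq_cons, Multiset.map_cons, Multiset.prod_cons,
        Multiset.map_singleton, Multiset.prod_singleton]
      rw [← Finset.prod_eq_multiset_prod, hdet z]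
      ring
    have h := congrArg Polynomial.roots hpq
    rwa [Polynomial.roots_multiset_prod_X_sub_C, Polynomial.roots_multiset_prod_X_sub_C] at h
  -- diagonal entries of a PSD matrix have nonnegative real part
  have hdiag : ∀ i : Fin 2, 0 ≤ (ρ i i).re := by
    intro i
    have h2 : (0:ℂ) ≤ ρ i i := by
      fin_cases i
      · exact hPSD.diag_nonneg
      · exact hPSD.diag_nonneg
    exact (Complex.le_def.mp h2).1
  have hcnn : 0 ≤ c := norm_nonneg _
  -- conclude
  set g : ℂ → ℝ := fun w => max (-w.re) 0 with hg
  have hsum : ∑ i, max (-(hH.eigenvalues i)) 0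
      = (((Finset.univ.val.map fun i => (hH.eigenvalues i : ℂ))).map g).sum := by
    rw [Finset.sum_eq_multiset_sum, Multiset.map_map]
    apply congrArg Multiset.sum
    apply Multiset.map_congr rfl
    intro i _
    simp [hg]
  rw [hsum, hmul]
  simp only [Multiset.insert_eq_cons, Multiset.map_cons, Multiset.sum_cons,
    Multiset.map_singleton, Multiset.sum_singleton, hg]
  rw [max_eq_right (neg_nonpos.mpr (hdiag 0)), max_eq_right (neg_nonpos.mpr (hdiag 1))]
  simp only [Complex.ofReal_re, Complex.neg_re, neg_neg]
  rw [max_eq_right (neg_nonpos.mpr hcnn), max_eq_left hcnn]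
  ring
end
end
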